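/- Let m ≥ 1 and w_1,…,w_n be positive integers summing to m, with f_i = (∑_{j<i} w_j)/m + w_i/(2m). For each i let σ_i be the first ⌈log₂(m/w_i)⌉ + 1 bits of the binary expansion of f_i. Then the σ_i are pairwise distinct, and moreover no σ_i is a prefix of σ_{i'} for i ≠ i'. -/

import Mathlib

/-! If `σ i` is a prefix of `σ i'`, then `f i` and `f i'` share their first `L i` binary digits,
so they lie in one dyadic interval of length `2 ^ (-L i) ≤ w i / (2 m)`. But `f i` and `f i'` are
the midpoints of the disjoint cells `[∑_{j<i} w j, ∑_{j≤i} w j) / m`, hence at distance at least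
`(w i + w i') / (2 m)`. -/

open Finset

/-- The first `L` bits of the binary expansion of a real `f ∈ [0,1)`. -/
noncomputable def binaryBits (f : ℝ) (L : ℕ) : List Bool :=
  (List.range L).map (fun k => decide (⌊f * 2 ^ (k + 1)⌋₊ % 2 = 1))

lemma binaryBits_length (f : ℝ) (L : ℕ) : (binaryBits f L).length = L := by
  simp [binaryBits]

lemma bit_eq_of_binaryBits_prefix {f f' : ℝ} {L L' k : ℕ}
    (h : binaryBits f L <+: binaryBits f' L') (hk : k < L) :
    ⌊f * 2 ^ (k + 1)⌋₊ % 2 = ⌊f' * 2 ^ (k + 1)⌋₊ % 2 := by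
  have := h.getElem (i := k) (by rwa [binaryBits_length])
  simp only [binaryBits, List.getElem_map, List.getElem_range, decide_eq_decide] at this
  omega

lemma floor_mul_two_pow_succ_div_two (f : ℝ) (k : ℕ) :
    ⌊f * 2 ^ (k + 1)⌋₊ / 2 = ⌊f * 2 ^ k⌋₊ := by
  rw [← Nat.floor_div_natCast]
  congr 1
  push_cast
  ring

/-- The binary digits of `⌊f * 2 ^ L⌋₊` are the first `L` bits of `f`; `f < 1` leaves nothing
above them. -/
lemma floor_mul_two_pow_eq_of_bits_eq {f f' : ℝ} (hf : f < 1) (hf' : f' < 1) {L : ℕ}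
    (h : ∀ k < L, ⌊f * 2 ^ (k + 1)⌋₊ % 2 = ⌊f' * 2 ^ (k + 1)⌋₊ % 2) :
    ⌊f * 2 ^ L⌋₊ = ⌊f' * 2 ^ L⌋₊ := by
  induction L with
  | zero => simp [Nat.floor_eq_zero.2 hf, Nat.floor_eq_zero.2 hf']
  | succ L ih =>
    have hhigh := ih fun k hk => h k (Nat.lt_succ_of_lt hk)
    have hlow := h L (Nat.lt_succ_self L)
    rw [← floor_mul_two_pow_succ_div_two f, ← floor_mul_two_pow_succ_div_two f'] at hhigh
    omega

lemma abs_sub_lt_of_floor_mul_eq {f f' c : ℝ} (hf : 0 ≤ f) (hf' : 0 ≤ f') (hc : 0 < c)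
    (h : ⌊f * c⌋₊ = ⌊f' * c⌋₊) : |f - f'| < c⁻¹ := by
  have hint : ⌊f * c⌋ = ⌊f' * c⌋ := by
    rw [← Int.natCast_floor_eq_floor (by positivity), ← Int.natCast_floor_eq_floor (by positivity),
      h]
  have := Int.abs_sub_lt_one_of_floor_eq_floor hint
  rw [← sub_mul, abs_mul, abs_of_pos hc] at this
  rwa [← one_div, lt_div_iff₀ hc]

lemma abs_sub_lt_of_binaryBits_prefix {f f' : ℝ} (hf0 : 0 ≤ f) (hf1 : f < 1)
    (hf0' : 0 ≤ f') (hf1' : f' < 1) {L L' : ℕ} (h : binaryBits f L <+: binaryBits f' L') :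
    |f - f'| < (2 ^ L)⁻¹ :=
  abs_sub_lt_of_floor_mul_eq hf0 hf0' (by positivity)
    (floor_mul_two_pow_eq_of_bits_eq hf1 hf1' fun _ hk => bit_eq_of_binaryBits_prefix h hk)

lemma le_two_pow_toNat_ceil_logb {x : ℝ} (hx : 0 < x) : x ≤ 2 ^ ⌈Real.logb 2 x⌉.toNat := by
  have h : Real.logb 2 x ≤ (⌈Real.logb 2 x⌉.toNat : ℝ) :=
    (Int.le_ceil _).trans (by exact_mod_cast Int.self_le_toNat _)
  rwa [Real.logb_le_iff_le_rpow one_lt_two hx, Real.rpow_natCast] at h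

lemma inv_two_pow_ceil_logb_succ_le {w m : ℝ} (hw : 0 < w) (hm : 0 < m) :
    (2 ^ (⌈Real.logb 2 (m / w)⌉.toNat + 1) : ℝ)⁻¹ ≤ w / (2 * m) := by
  have h := le_two_pow_toNat_ceil_logb (div_pos hm hw)
  rw [div_le_iff₀ hw] at h
  rw [pow_succ, ← one_div, div_le_div_iff₀ (by positivity) (by positivity)]
  linarith

section CellMidpoint

variable {ι : Type*} [LinearOrder ι] [LocallyFiniteOrderBot ι] {w : ι → ℝ} {m : ℝ}

variable (w m) in
noncomputable def cellMidpoint (i : ι) : ℝ := (∑ j ∈ Iio i, w j) / m + w i / (2 * m)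

lemma cellMidpoint_nonneg (hw : ∀ j, 0 ≤ w j) (hm : 0 ≤ m) (i : ι) :
    0 ≤ cellMidpoint w m i := by
  have hsum : 0 ≤ ∑ j ∈ Iio i, w j := sum_nonneg fun j _ => hw j
  have hwi := hw i
  unfold cellMidpoint
  positivity

lemma cellMidpoint_lt_one [Fintype ι] (hw : ∀ j, 0 ≤ w j) (hsum : ∑ j, w j = m) {i : ι}
    (hwi : 0 < w i) : cellMidpoint w m i < 1 := by
  have hle : ∑ j ∈ Iio i, w j + w i ≤ m := by
    rw [sum_Iio_add_eq_sum_Iic, ← hsum]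
    exact sum_le_univ_sum_of_nonneg hw
  have hm : 0 < m := by linarith [sum_nonneg fun j (_ : j ∈ Iio i) => hw j]
  rw [cellMidpoint, div_add_div _ _ hm.ne' (by positivity), div_lt_one (by positivity)]
  nlinarith

lemma sum_Iio_add_le_sum_Iio (hw : ∀ j, 0 ≤ w j) {i i' : ι} (h : i < i') :
    ∑ j ∈ Iio i, w j + w i ≤ ∑ j ∈ Iio i', w j := by
  rw [sum_Iio_add_eq_sum_Iic]
  exact sum_le_sum_of_subset_of_nonneg (fun j hj => mem_Iio.2 ((mem_Iic.1 hj).trans_lt h))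
    fun j _ _ => hw j

lemma add_div_two_mul_le_cellMidpoint_sub (hw : ∀ j, 0 ≤ w j) (hm : 0 < m) {i i' : ι}
    (h : i < i') : (w i + w i') / (2 * m) ≤ cellMidpoint w m i' - cellMidpoint w m i := by
  have := sum_Iio_add_le_sum_Iio hw h
  rw [cellMidpoint, cellMidpoint, div_le_iff₀ (by positivity)]
  field_simp
  linarith

lemma add_div_two_mul_le_abs_cellMidpoint_sub (hw : ∀ j, 0 ≤ w j) (hm : 0 < m) {i i' : ι}
    (h : i ≠ i') : (w i + w i') / (2 * m) ≤ |cellMidpoint w m i - cellMidpoint w m i'| := by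
  rcases h.lt_or_gt with h | h
  · rw [abs_sub_comm]
    exact (add_div_two_mul_le_cellMidpoint_sub hw hm h).trans (le_abs_self _)
  · rw [add_comm]
    exact (add_div_two_mul_le_cellMidpoint_sub hw hm h).trans (le_abs_self _)

end CellMidpoint

theorem truncated_expansions_prefix_free_general (n m : ℕ) (w : Fin n → ℕ)
    (hw : ∀ i, 0 < w i) (hsum : ∑ i, w i = m)
    (f : Fin n → ℝ)
    (hf : ∀ i, f i = (∑ j ∈ Finset.Iio i, (w j : ℝ)) / m + (w i : ℝ) / (2 * m))
    (σ : Fin n → List Bool)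
    (hσ : ∀ i, σ i = binaryBits (f i) ((⌈Real.logb 2 ((m : ℝ) / (w i : ℝ))⌉).toNat + 1)) :
    (∀ i i' : Fin n, i ≠ i' → σ i ≠ σ i') ∧
      (∀ i i' : Fin n, i ≠ i' → ¬ (σ i <+: σ i')) := by
  have hw' : ∀ i, (0 : ℝ) < w i := fun i => by exact_mod_cast hw i
  have hw0 : ∀ i, (0 : ℝ) ≤ w i := fun i => (hw' i).le
  have hsum' : ∑ i, (w i : ℝ) = m := by exact_mod_cast hsum
  obtain rfl : f = cellMidpoint (fun j => (w j : ℝ)) m := funext hf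
  have prefix_free : ∀ i i', i ≠ i' → ¬ σ i <+: σ i' := by
    intro i i' hne hpre
    have hm : (0 : ℝ) < m :=
      hsum' ▸ (hw' i).trans_le (single_le_sum (fun j _ => hw0 j) (mem_univ i))
    rw [hσ, hσ] at hpre
    have hclose := abs_sub_lt_of_binaryBits_prefix (cellMidpoint_nonneg hw0 hm.le i)
      (cellMidpoint_lt_one hw0 hsum' (hw' i)) (cellMidpoint_nonneg hw0 hm.le i')
      (cellMidpoint_lt_one hw0 hsum' (hw' i')) hpre
    have hfar := add_div_two_mul_le_abs_cellMidpoint_sub hw0 hm hne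
    have hresolution := inv_two_pow_ceil_logb_succ_le (hw' i) hm
    have hgap : (w i : ℝ) / (2 * m) < (w i + w i') / (2 * m) := by
      gcongr
      linarith [hw' i']
    linarith
  exact ⟨fun i i' hne h => prefix_free i i' hne (h ▸ List.prefix_refl _), prefix_free⟩

theorem truncated_expansions_prefix_free (n m : ℕ) (hm : 1 ≤ m) (w : Fin n → ℕ)
    (hw : ∀ i, 0 < w i) (hsum : ∑ i, w i = m)
    (f : Fin n → ℝ)
    (hf : ∀ i, f i = (∑ j ∈ Finset.Iio i, (w j : ℝ)) / m + (w i : ℝ) / (2 * m))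
    (σ : Fin n → List Bool)
    (hσ : ∀ i, σ i = binaryBits (f i) ((⌈Real.logb 2 ((m : ℝ) / (w i : ℝ))⌉).toNat + 1)) :
    (∀ i i' : Fin n, i ≠ i' → σ i ≠ σ i') ∧
      (∀ i i' : Fin n, i ≠ i' → ¬ (σ i <+: σ i')) :=
  truncated_expansions_prefix_free_general n m w hw hsum f hf σ hσ
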